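/- For uniform X^{n+1} on {0,1}^{n+1}, G_s(X^{n+1}) ≥ ℓ_n · 2^s · G_s(X^n), where ℓ_n = (∑_{i=1}^{2^n}(i-1)^s)/(∑_{i=1}^{2^n} i^s); moreover ℓ_n ≥ 1 - (s+1)/2^n + O(2^{-n·min(1+s,2)}), and the infinite product ∏_{n≥1} ℓ_n^{-1} converges (is finite). -/

import Mathlib

open Finset Filter

/-- `ℓ_n = (∑_{i=1}^{2^n} (i-1)^s) / (∑_{i=1}^{2^n} i^s)`. -/
noncomputable def ellSeq (s : ℝ) (n : ℕ) : ℝ :=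
  (∑ i ∈ Finset.Icc (1 : ℕ) (2 ^ n), ((i : ℝ) - 1) ^ s) /
    (∑ i ∈ Finset.Icc (1 : ℕ) (2 ^ n), (i : ℝ) ^ s)

/-- The guessing moment `G_s(X^n)` of a uniform vector on `{0,1}^n`. -/
noncomputable def Gunif (s : ℝ) (n : ℕ) : ℝ :=
  (2 : ℝ) ^ (-(n : ℝ)) * ∑ i ∈ Finset.Icc (1 : ℕ) (2 ^ n), (i : ℝ) ^ s

/-!
Write `S(M) = ∑_{i=1}^M i^s`. The numerator of `ℓ_n` is `S(2^n - 1)`, so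
`ℓ_n = 1 - 2^{ns} / S(2^n)` and `ℓ_n⁻¹ = 1 + 2^{ns} / S(2^n - 1)`.
Pairing the terms `2j+1` and `2j+2` of `S(2M)` with `2j` gives `S(2M) ≥ 2^{s+1} S(M-1)`, which is
the recursion for `G_s`. Comparing `S(M)` with `∫_0^M x^s dx = M^{s+1}/(s+1)` gives
`M^s / S(M) ≤ (s+1)/M`; hence `ℓ_n ≥ 1 - (s+1)/2^n` (so the constant `C = 0` works), and
`0 ≤ ℓ_n⁻¹ - 1 = O(2^{-n})` is summable, so the product converges.
-/

open Real

@[to_additive]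
lemma prod_Icc_eq_prod_range_succ {M : Type*} [CommMonoid M] (f : ℕ → M) (n : ℕ) :
    ∏ i ∈ Icc 1 n, f i = ∏ k ∈ range n, f (k + 1) := by
  rw [← Finset.Ico_add_one_right_eq_Icc, Finset.prod_Ico_eq_prod_range]
  simp [add_comm]

lemma sum_range_two_mul {M : Type*} [AddCommMonoid M] (f : ℕ → M) (n : ℕ) :
    ∑ k ∈ range (2 * n), f k = ∑ j ∈ range n, (f (2 * j) + f (2 * j + 1)) := by
  induction n with
  | zero => simp
  | succ n ih => rw [Nat.mul_succ, sum_range_succ, sum_range_succ, sum_range_succ, ih, add_assoc]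

noncomputable def powSum (s : ℝ) (M : ℕ) : ℝ := ∑ i ∈ Icc 1 M, (i : ℝ) ^ s

section PowerSums

variable {s : ℝ}

lemma powSum_pos (s : ℝ) {M : ℕ} (hM : 1 ≤ M) : 0 < powSum s M :=
  sum_pos (fun i hi => rpow_pos_of_pos (by exact_mod_cast (mem_Icc.mp hi).1) s)
    ⟨1, mem_Icc.mpr ⟨le_rfl, hM⟩⟩

lemma powSum_eq_powSum_sub_one_add (s : ℝ) {M : ℕ} (hM : 1 ≤ M) :
    powSum s M = powSum s (M - 1) + (M : ℝ) ^ s := by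
  obtain ⟨m, rfl⟩ := Nat.exists_eq_add_of_le' hM
  rw [powSum, sum_Icc_succ_top (by omega), Nat.add_sub_cancel, powSum]

-- The term `i = 1` contributes `0 ^ s`, which is `0` only for `s ≠ 0` (`0 ^ 0 = 1`).
lemma sum_Icc_sub_one_rpow_eq_powSum (hs : s ≠ 0) (M : ℕ) :
    ∑ i ∈ Icc 1 M, ((i : ℝ) - 1) ^ s = powSum s (M - 1) := by
  cases M with
  | zero => simp [powSum]
  | succ m =>
    rw [sum_Icc_eq_sum_range_succ, sum_range_succ', powSum, sum_Icc_eq_sum_range_succ]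
    simp [zero_rpow hs]

lemma div_add_one_le_powSum (hs : 0 ≤ s) (M : ℕ) : (M : ℝ) ^ (s + 1) / (s + 1) ≤ powSum s M := by
  have hmono : MonotoneOn (fun x : ℝ => x ^ s) (Set.Icc 0 (0 + M)) :=
    fun x hx y _ hxy => rpow_le_rpow hx.1 hxy hs
  calc (M : ℝ) ^ (s + 1) / (s + 1) = ∫ x in (0 : ℝ)..0 + M, x ^ s := by
        rw [zero_add, integral_rpow (Or.inl (by linarith)), zero_rpow (by linarith), sub_zero]
    _ ≤ ∑ i ∈ range M, ((0 : ℝ) + ↑(i + 1)) ^ s := hmono.integral_le_sum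
    _ = powSum s M := by simp [powSum, sum_Icc_eq_sum_range_succ]

lemma rpow_div_powSum_le (hs : 0 ≤ s) {M : ℕ} (hM : 1 ≤ M) :
    (M : ℝ) ^ s / powSum s M ≤ (s + 1) / M := by
  have hM' : (0 : ℝ) < M := by exact_mod_cast hM
  rw [div_le_div_iff₀ (powSum_pos s hM) hM', ← rpow_add_one hM'.ne']
  have := div_add_one_le_powSum hs M
  rw [div_le_iff₀ (by linarith)] at this
  linarith

lemma two_mul_two_rpow_mul_sum_sub_one_le (hs : 0 ≤ s) (M : ℕ) :
    2 * 2 ^ s * ∑ i ∈ Icc 1 M, ((i : ℝ) - 1) ^ s ≤ powSum s (2 * M) := by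
  rw [powSum, sum_Icc_eq_sum_range_succ, sum_Icc_eq_sum_range_succ, sum_range_two_mul, mul_sum]
  refine sum_le_sum fun j _ => ?_
  push_cast
  rw [add_sub_cancel_right, mul_assoc, ← mul_rpow zero_le_two (Nat.cast_nonneg j)]
  have h1 : (2 * (j : ℝ)) ^ s ≤ (2 * j + 1) ^ s := rpow_le_rpow (by positivity) (by linarith) hs
  have h2 : (2 * (j : ℝ)) ^ s ≤ (2 * j + 1 + 1) ^ s := rpow_le_rpow (by positivity) (by linarith) hs
  linarith

lemma rpow_div_powSum_sub_one_le (hs : 0 ≤ s) {M : ℕ} (hM : 2 ≤ M) :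
    (M : ℝ) ^ s / powSum s (M - 1) ≤ 2 ^ (s + 1) * (s + 1) / M := by
  have hm : 1 ≤ M - 1 := by omega
  have hM' : (M : ℝ) ≤ 2 * ((M - 1 : ℕ) : ℝ) := by
    have : (2 : ℝ) ≤ M := by exact_mod_cast hM
    rw [Nat.cast_sub (by omega), Nat.cast_one]
    linarith
  have hT := powSum_pos s hm
  calc (M : ℝ) ^ s / powSum s (M - 1)
      ≤ 2 ^ s * (((M - 1 : ℕ) : ℝ) ^ s / powSum s (M - 1)) := by
        rw [← mul_div_assoc, ← mul_rpow zero_le_two (by positivity)]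
        gcongr
    _ ≤ 2 ^ s * ((s + 1) / ((M - 1 : ℕ) : ℝ)) :=
        mul_le_mul_of_nonneg_left (rpow_div_powSum_le hs hm) (by positivity)
    _ ≤ 2 ^ s * (2 * (s + 1) / M) := by
        gcongr 2 ^ s * ?_
        rw [div_le_div_iff₀ (by positivity) (by positivity)]
        nlinarith
    _ = 2 ^ (s + 1) * (s + 1) / M := by rw [rpow_add_one two_ne_zero]; ring

lemma ellSeq_eq_div (hs : s ≠ 0) (n : ℕ) :
    ellSeq s n = powSum s (2 ^ n - 1) / powSum s (2 ^ n) := by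
  rw [ellSeq, sum_Icc_sub_one_rpow_eq_powSum hs]
  rfl

lemma ellSeq_eq_one_sub (hs : s ≠ 0) (n : ℕ) :
    ellSeq s n = 1 - ((2 : ℝ) ^ n) ^ s / powSum s (2 ^ n) := by
  have hS := powSum_pos s (Nat.one_le_two_pow (n := n))
  rw [ellSeq_eq_div hs, eq_sub_iff_add_eq, ← add_div, div_eq_one_iff_eq hS.ne',
    powSum_eq_powSum_sub_one_add s Nat.one_le_two_pow (M := 2 ^ n), Nat.cast_pow, Nat.cast_two]

lemma inv_ellSeq_eq_one_add (hs : s ≠ 0) {n : ℕ} (hn : 1 ≤ n) :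
    (ellSeq s n)⁻¹ = 1 + ((2 : ℝ) ^ n) ^ s / powSum s (2 ^ n - 1) := by
  have hT := powSum_pos s (M := 2 ^ n - 1) (by have := Nat.pow_le_pow_right two_pos hn; omega)
  rw [ellSeq_eq_div hs, inv_div, powSum_eq_powSum_sub_one_add s Nat.one_le_two_pow (M := 2 ^ n),
    add_div, div_self hT.ne', Nat.cast_pow, Nat.cast_two]

lemma ellSeq_mul_two_rpow_mul_Gunif_le (hs : 0 ≤ s) (n : ℕ) :
    ellSeq s n * 2 ^ s * Gunif s n ≤ Gunif s (n + 1) := by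
  have hS := powSum_pos s (Nat.one_le_two_pow (n := n))
  have hpairs := two_mul_two_rpow_mul_sum_sub_one_le hs (2 ^ n)
  have hpow : (2 : ℝ) ^ (-((n + 1 : ℕ) : ℝ)) = (2 : ℝ) ^ (-(n : ℝ)) / 2 := by
    rw [Nat.cast_succ, neg_add, rpow_add two_pos, rpow_neg_one, div_eq_mul_inv]
  calc ellSeq s n * 2 ^ s * Gunif s n
      = 2 ^ (-(n : ℝ)) * (2 ^ s * ∑ i ∈ Icc 1 (2 ^ n), (((i : ℕ) : ℝ) - 1) ^ s) := by
        rw [ellSeq, Gunif, ← powSum]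
        field_simp [hS.ne']
    _ ≤ 2 ^ (-(n : ℝ)) * (powSum s (2 * 2 ^ n) / 2) := by gcongr; linarith
    _ = Gunif s (n + 1) := by rw [Gunif, hpow, pow_succ, mul_comm (2 ^ n) 2, powSum]; ring

lemma one_sub_div_two_pow_le_ellSeq (hs : 0 < s) (n : ℕ) : 1 - (s + 1) / 2 ^ n ≤ ellSeq s n := by
  have := rpow_div_powSum_le hs.le (Nat.one_le_two_pow (n := n))
  rw [ellSeq_eq_one_sub hs.ne']
  push_cast at this
  linarith

lemma inv_ellSeq_sub_one_mem_Icc (hs : 0 < s) {n : ℕ} (hn : 1 ≤ n) :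
    (ellSeq s n)⁻¹ - 1 ∈ Set.Icc 0 (2 ^ (s + 1) * (s + 1) * (1 / 2) ^ n) := by
  have hM : 2 ≤ 2 ^ n := by simpa using Nat.pow_le_pow_right two_pos hn
  have hbound := rpow_div_powSum_sub_one_le hs.le hM
  rw [inv_ellSeq_eq_one_add hs.ne' hn, add_sub_cancel_left]
  push_cast at hbound
  refine ⟨div_nonneg (by positivity) (powSum_pos s (by omega)).le, hbound.trans_eq ?_⟩
  rw [one_div_pow, mul_one_div]

lemma tendsto_prod_inv_ellSeq (hs : 0 < s) :
    ∃ L, Tendsto (fun N : ℕ => ∏ n ∈ Icc 1 N, (ellSeq s n)⁻¹) atTop (nhds L) := by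
  have hsummable : Summable fun n => ‖(ellSeq s (n + 1))⁻¹ - 1‖ := by
    refine Summable.of_nonneg_of_le (fun _ => norm_nonneg _) (fun n => ?_)
      ((summable_nat_add_iff 1).mpr (summable_geometric_two.mul_left (2 ^ (s + 1) * (s + 1))))
    obtain ⟨h0, h1⟩ := inv_ellSeq_sub_one_mem_Icc hs (Nat.le_add_left 1 n)
    rwa [Real.norm_of_nonneg h0]
  have hprod := (multipliable_one_add_of_summable hsummable).tendsto_prod_tprod_nat
  simp only [add_sub_cancel] at hprod
  exact ⟨_, by simpa only [prod_Icc_eq_prod_range_succ] using hprod⟩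

end PowerSums

/-- `G_s(X^{n+1}) ≥ ℓ_n·2^s·G_s(X^n)`, the estimate
`ℓ_n ≥ 1 - (s+1)/2^n + O(2^{-n·min(1+s,2)})`, and convergence of `∏ ℓ_n⁻¹`. -/
theorem ell_properties (s : ℝ) (hs : 0 < s) :
    (∀ n : ℕ, ellSeq s n * (2 : ℝ) ^ s * Gunif s n ≤ Gunif s (n + 1)) ∧
    (∃ C : ℝ, ∀ n : ℕ, 1 ≤ n →
      1 - (s + 1) / 2 ^ n - C / (2 : ℝ) ^ ((n : ℝ) * min (1 + s) 2) ≤ ellSeq s n) ∧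
    (∃ L : ℝ, Tendsto (fun N : ℕ => ∏ n ∈ Finset.Icc 1 N, (ellSeq s n)⁻¹) atTop (nhds L)) :=
  ⟨ellSeq_mul_two_rpow_mul_Gunif_le hs.le,
    ⟨0, fun n _ => by simpa using one_sub_div_two_pow_le_ellSeq hs n⟩,
    tendsto_prod_inv_ellSeq hs⟩
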